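/- For every prime p, the number N_p = (p^p − 1)/(p − 1) = 1 + p + p^2 + ... + p^{p−1} is a period of the Bell numbers modulo p: for all n ≥ 0, B_{n + N_p} ≡ B_n (mod p). -/

import Mathlib

open Finset Polynomial

/-- Stirling numbers of the second kind. -/
def S2 : ℕ → ℕ → ℕ
  | 0, 0 => 1
  | 0, _ + 1 => 0
  | _ + 1, 0 => 0
  | n + 1, k + 1 => (k + 1) * S2 n (k + 1) + S2 n k

lemma S2_eq_zero {n k : ℕ} (h : n < k) : S2 n k = 0 := by
  induction n generalizing k with
  | zero => match k, h with | k+1, _ => rfl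
  | succ n ih =>
    match k, h with
    | k+1, h =>
      have h1 : n < k + 1 := by omega
      have h2 : n < k := by omega
      show (k + 1) * S2 n (k + 1) + S2 n k = 0
      rw [ih h1, ih h2]; ring

lemma S2_diag (n : ℕ) : S2 n n = 1 := by
  induction n with
  | zero => rfl
  | succ n ih => show (n+1) * S2 n (n+1) + S2 n n = 1; rw [ih, S2_eq_zero (Nat.lt_succ_self n)]; ring

section Helpers

variable {R : Type} [CommRing R]

lemma X_pow_expand (n : ℕ) :
    (X : R[X]) ^ n = ∑ k ∈ range (n+1), C ((S2 n k : ℕ) : R) * descPochhammer R k := by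
  induction n with
  | zero => simp [S2]
  | succ n ih =>
    have key : ∀ k, (C ((S2 n k : ℕ) : R) * descPochhammer R k) * X
        = C ((S2 n k : ℕ) : R) * descPochhammer R (k+1)
          + C (((k * S2 n k : ℕ) : R)) * descPochhammer R k := by
      intro k
      have h : descPochhammer R k * (X : R[X]) =
          descPochhammer R (k+1) + (k : R[X]) * descPochhammer R k := by
        rw [descPochhammer_succ_right]; ring
      rw [mul_assoc, h]
      simp only [Nat.cast_mul, C_mul, C_eq_natCast]
      ring
    calc (X : R[X]) ^ (n+1)
        = (∑ k ∈ range (n+1), C ((S2 n k : ℕ) : R) * descPochhammer R k) * X := by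
          rw [pow_succ, ih]
      _ = ∑ k ∈ range (n+1), (C ((S2 n k : ℕ) : R) * descPochhammer R (k+1)
            + C (((k * S2 n k : ℕ) : R)) * descPochhammer R k) := by
          rw [Finset.sum_mul]; exact Finset.sum_congr rfl fun k _ => key k
      _ = (∑ k ∈ range (n+1), C ((S2 n k : ℕ) : R) * descPochhammer R (k+1))
            + ∑ k ∈ range (n+1), C (((k * S2 n k : ℕ) : R)) * descPochhammer R k :=
          Finset.sum_add_distrib
      _ = (∑ k ∈ range (n+1), C ((S2 n k : ℕ) : R) * descPochhammer R (k+1))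
            + ∑ k ∈ range (n+1), C ((((k+1) * S2 n (k+1) : ℕ)) : R) * descPochhammer R (k+1) := by
          congr 1
          rw [Finset.sum_range_succ' (fun k => C (((k * S2 n k : ℕ)) : R) * descPochhammer R k) n]
          rw [Finset.sum_range_succ (fun k => C ((((k+1) * S2 n (k+1) : ℕ)) : R) * descPochhammer R (k+1)) n]
          simp [S2_eq_zero (Nat.lt_succ_self n)]
      _ = ∑ k ∈ range (n+1), C ((S2 (n+1) (k+1) : ℕ) : R) * descPochhammer R (k+1) := by
          rw [← Finset.sum_add_distrib]
          refine Finset.sum_congr rfl fun k _ => ?_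
          show _ = C (((k + 1) * S2 n (k + 1) + S2 n k : ℕ) : R) * descPochhammer R (k+1)
          simp only [Nat.cast_mul, Nat.cast_add, C_mul, C_add, C_eq_natCast, Nat.cast_one]
          ring
      _ = ∑ k ∈ range (n+2), C ((S2 (n+1) k : ℕ) : R) * descPochhammer R k := by
          rw [Finset.sum_range_succ' (fun k => C ((S2 (n+1) k : ℕ) : R) * descPochhammer R k) (n+1)]
          show _ = _ + C ((S2 (n+1) 0 : ℕ) : R) * descPochhammer R 0
          rw [show S2 (n+1) 0 = 0 from rfl]
          simp

lemma descPochhammer_prod (R : Type) [CommRing R] (n : ℕ) :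
    descPochhammer R n = ∏ i ∈ range n, (X - C (i : R)) := by
  induction n with
  | zero => simp
  | succ n ih => rw [descPochhammer_succ_right, ih, Finset.prod_range_succ, C_eq_natCast]

variable (p : ℕ) [Fact p.Prime]

lemma prod_univ_X_sub_C : ∏ a : ZMod p, (X - C a) = X ^ p - X := by
  have hq : Fintype.card (ZMod p) = p := ZMod.card p
  have hplt : 1 < p := (Fact.out : p.Prime).one_lt
  have hmonic : (X ^ p - X : (ZMod p)[X]).Monic := by
    obtain ⟨m, rfl⟩ : ∃ m, p = m + 2 := ⟨p - 2, by omega⟩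
    exact monic_X_pow_sub (by rw [degree_X]; exact_mod_cast Nat.one_lt_succ_succ m)
  have hroots : (X ^ p - X : (ZMod p)[X]).roots = Finset.univ.val := by
    have := FiniteField.roots_X_pow_card_sub_X (ZMod p)
    rwa [hq] at this
  have hdeg : (X ^ p - X : (ZMod p)[X]).natDegree = p :=
    FiniteField.X_pow_card_sub_X_natDegree_eq _ hplt
  have hsplits : Splits (X ^ p - X : (ZMod p)[X]) := by
    rw [splits_iff_card_roots, hroots, hdeg]
    simpa using hq
  have := hsplits.eq_prod_roots_of_monic hmonic
  rw [hroots] at this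
  rw [this]
  rfl

lemma range_prod_X_sub_C : ∏ i ∈ range p, (X - C (i : ZMod p)) = X ^ p - X := by
  rw [← prod_univ_X_sub_C p]
  refine Finset.prod_bij' (fun i _ => (i : ZMod p)) (fun a _ => a.val)
    (fun _ _ => Finset.mem_univ _) (fun a _ => Finset.mem_range.mpr (ZMod.val_lt a))
    (fun i hi => by
      simp [ZMod.val_cast_of_lt (Finset.mem_range.mp hi)])
    (fun a _ => by simp [ZMod.natCast_val, ZMod.cast_id]) (fun i _ => rfl)

lemma descPochhammer_card : descPochhammer (ZMod p) p = X ^ p - X := by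
  rw [descPochhammer_prod, range_prod_X_sub_C]

lemma shift_prod (c : ZMod p) : ∏ i ∈ range p, (X - C (c + (i : ZMod p))) = X ^ p - X := by
  rw [← prod_univ_X_sub_C p]
  refine Finset.prod_bij' (fun i _ => c + (i : ZMod p)) (fun a _ => (a - c).val)
    (fun _ _ => Finset.mem_univ _) (fun a _ => Finset.mem_range.mpr (ZMod.val_lt _))
    (fun i hi => by
      show (c + (i : ZMod p) - c).val = i
      rw [add_sub_cancel_left]
      simp [ZMod.val_cast_of_lt (Finset.mem_range.mp hi)])
    (fun a _ => by simp [ZMod.natCast_val, ZMod.cast_id]) (fun i _ => rfl)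

lemma descPochhammer_add_card (k : ℕ) :
    descPochhammer (ZMod p) (k + p) = descPochhammer (ZMod p) k * descPochhammer (ZMod p) p := by
  rw [descPochhammer_prod, descPochhammer_prod, Finset.prod_range_add, descPochhammer_card]
  congr 1
  rw [← shift_prod p ((k : ℕ) : ZMod p)]
  refine Finset.prod_congr rfl fun i _ => ?_
  push_cast
  ring

/-- Bell numbers. -/
def bell (n : ℕ) : ℕ := ∑ k ∈ Finset.range (n + 1), S2 n k

variable {p}

/-- The Bell linear functional. -/
noncomputable def L : (ZMod p)[X] →ₗ[ZMod p] ZMod p :=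
  Polynomial.lsum (fun n => (bell n : ZMod p) • LinearMap.id)

lemma L_X_pow (n : ℕ) : L ((X : (ZMod p)[X]) ^ n) = (bell n : ZMod p) := by
  show (X ^ n : (ZMod p)[X]).sum (fun n a => (bell n : ZMod p) • a) = _
  rw [X_pow_eq_monomial, Polynomial.sum_monomial_index]
  · simp
  · simp

lemma L_C_mul (a : ZMod p) (f : (ZMod p)[X]) : L (C a * f) = a * L f := by
  rw [← smul_eq_C_mul, map_smul, smul_eq_mul]

lemma L_descPochhammer (k : ℕ) : L (descPochhammer (ZMod p) k) = 1 := by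
  induction k using Nat.strong_induction_on with
  | _ k ih =>
    have hexp := X_pow_expand (R := ZMod p) k
    have := congrArg L hexp
    rw [L_X_pow, map_sum] at this
    rw [Finset.sum_range_succ] at this
    simp only [L_C_mul] at this
    rw [S2_diag] at this
    have hsum : ∑ j ∈ range k, ((S2 k j : ℕ) : ZMod p) * L (descPochhammer (ZMod p) j)
        = ∑ j ∈ range k, ((S2 k j : ℕ) : ZMod p) := by
      refine Finset.sum_congr rfl fun j hj => ?_
      rw [ih j (Finset.mem_range.mp hj), mul_one]
    rw [hsum] at this
    have hbell : (bell k : ZMod p) = (∑ j ∈ range k, ((S2 k j : ℕ) : ZMod p)) + 1 := by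
      rw [bell, Finset.sum_range_succ, S2_diag]
      push_cast
      ring
    rw [hbell] at this
    -- this : A + 1 = A + 1 * L (dP k)
    have := add_left_cancel this
    rw [Nat.cast_one, one_mul] at this
    exact this.symm

variable (p)

lemma bell_cast (n : ℕ) : (bell n : ZMod p) = ∑ k ∈ range (n+1), ((S2 n k : ℕ) : ZMod p) := by
  rw [bell]; push_cast; rfl

lemma touchard (n : ℕ) : (bell (n + p) : ZMod p) = bell (n + 1) + bell n := by
  have hXp : (X : (ZMod p)[X]) ^ p = descPochhammer (ZMod p) p + X := by
    rw [descPochhammer_card]; ring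
  have hid : (X : (ZMod p)[X]) ^ (n + p)
      = X ^ (n+1) + ∑ k ∈ range (n+1), C ((S2 n k : ℕ) : ZMod p) * descPochhammer (ZMod p) (k + p) := by
    calc (X : (ZMod p)[X]) ^ (n + p) = X ^ n * X ^ p := by rw [pow_add]
      _ = X ^ (n+1) + X ^ n * descPochhammer (ZMod p) p := by rw [hXp]; ring
      _ = X ^ (n+1) + (∑ k ∈ range (n+1), C ((S2 n k : ℕ) : ZMod p) * descPochhammer (ZMod p) k)
            * descPochhammer (ZMod p) p := by rw [← X_pow_expand]
      _ = _ := by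
          congr 1
          rw [Finset.sum_mul]
          refine Finset.sum_congr rfl fun k _ => ?_
          rw [descPochhammer_add_card, mul_assoc]
  have := congrArg L hid
  rw [L_X_pow, map_add, L_X_pow, map_sum] at this
  simp only [L_C_mul, L_descPochhammer, mul_one] at this
  rw [this, ← bell_cast]

lemma L_h_mul (g : (ZMod p)[X]) : L (g * (X ^ p - X - 1)) = 0 := by
  induction g using Polynomial.induction_on' with
  | add f g hf hg => rw [add_mul, map_add, hf, hg, add_zero]
  | monomial m a =>
    rw [← C_mul_X_pow_eq_monomial, mul_assoc, L_C_mul]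
    have hkey : (X : (ZMod p)[X]) ^ m * (X ^ p - X - 1) = X ^ (m + p) - X ^ (m + 1) - X ^ m := by
      ring
    rw [hkey, map_sub, map_sub, L_X_pow, L_X_pow, L_X_pow, touchard]
    ring

lemma prod_univ_X_add_C : ∏ a : ZMod p, (X + C a) = X ^ p - X := by
  rw [← prod_univ_X_sub_C p]
  exact Fintype.prod_equiv (Equiv.neg (ZMod p)) _ _ (fun a => by simp)

lemma range_prod_X_add_C : ∏ i ∈ range p, (X + C (i : ZMod p)) = X ^ p - X := by
  rw [← prod_univ_X_add_C p]
  refine Finset.prod_bij' (fun i _ => (i : ZMod p)) (fun a _ => a.val)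
    (fun _ _ => Finset.mem_univ _) (fun a _ => Finset.mem_range.mpr (ZMod.val_lt a))
    (fun i hi => by
      simp [ZMod.val_cast_of_lt (Finset.mem_range.mp hi)])
    (fun a _ => by simp [ZMod.natCast_val, ZMod.cast_id]) (fun i _ => rfl)

lemma dvd_key : (X ^ p - X - 1 : (ZMod p)[X]) ∣ X ^ (∑ k ∈ range p, p ^ k) - 1 := by
  have hplt : 1 < p := (Fact.out : p.Prime).one_lt
  have hdeg : (X ^ p - X - 1 : (ZMod p)[X]).degree = p := by
    have h2 : (X + C 1 : (ZMod p)[X]).degree < (X ^ p : (ZMod p)[X]).degree := by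
      rw [degree_X_add_C 1, degree_X_pow]; exact_mod_cast hplt
    have hrw : (X ^ p - X - 1 : (ZMod p)[X]) = X ^ p - (X + C 1) := by rw [C_1]; ring
    rw [hrw, degree_sub_eq_left_of_degree_lt h2, degree_X_pow]
  haveI : Nontrivial (AdjoinRoot (X ^ p - X - 1 : (ZMod p)[X])) := by
    refine AdjoinRoot.nontrivial _ ?_
    rw [hdeg]
    exact_mod_cast (by omega : p ≠ 0)
  haveI : CharP (AdjoinRoot (X ^ p - X - 1 : (ZMod p)[X])) p :=
    charP_of_injective_ringHom (AdjoinRoot.of _).injective p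
  set A := AdjoinRoot (X ^ p - X - 1 : (ZMod p)[X])
  let x : A := AdjoinRoot.root _
  have hrel : x ^ p = x + 1 := by
    have h0 : (Polynomial.aeval x) (X ^ p - X - 1 : (ZMod p)[X]) = 0 := by
      rw [AdjoinRoot.aeval_eq]; exact AdjoinRoot.mk_self
    simp only [map_sub, map_pow, Polynomial.aeval_X, map_one] at h0
    rw [sub_sub] at h0
    exact sub_eq_zero.mp h0
  have hfrob : ∀ k : ℕ, x ^ (p ^ k) = x + k := by
    intro k
    induction k with
    | zero => simp
    | succ k ih =>
      rw [pow_succ, pow_mul, ih, add_pow_char, hrel]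
      have hk : ((k : A)) ^ p = (k : A) := by
        rw [← map_natCast (AdjoinRoot.of _) k, ← map_pow, ZMod.pow_card]
      rw [hk]
      push_cast
      ring
  have hN : x ^ (∑ k ∈ range p, p ^ k) = 1 := by
    rw [← Finset.prod_pow_eq_pow_sum]
    have hprod : ∏ k ∈ range p, x ^ (p ^ k) = ∏ k ∈ range p, (x + (k : A)) :=
      Finset.prod_congr rfl fun k _ => hfrob k
    rw [hprod]
    have hpoly := congrArg (Polynomial.aeval x) (range_prod_X_add_C p)
    rw [map_prod, map_sub, map_pow, Polynomial.aeval_X] at hpoly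
    simp only [map_add, Polynomial.aeval_X, Polynomial.aeval_C] at hpoly
    have hcast : ∀ k : ℕ, (algebraMap (ZMod p) A) ((k : ZMod p)) = (k : A) := fun k =>
      map_natCast _ k
    simp only [hcast] at hpoly
    rw [hpoly, hrel]
    ring
  have hmk : AdjoinRoot.mk (X ^ p - X - 1 : (ZMod p)[X]) (X ^ (∑ k ∈ range p, p ^ k) - 1) = 0 := by
    rw [← AdjoinRoot.aeval_eq, map_sub, map_pow, Polynomial.aeval_X, map_one, hN, sub_self]
  exact AdjoinRoot.mk_eq_zero.mp hmk

end Helpers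

/-- r-Stirling numbers of the second kind. -/
def rS2 (r : ℕ) : ℕ → ℕ → ℕ
  | 0, 0 => 1
  | 0, _ + 1 => 0
  | n + 1, 0 => r * rS2 r n 0
  | n + 1, k + 1 => rS2 r n k + (k + 1 + r) * rS2 r n (k + 1)

/-- Unsigned r-Stirling numbers of the first kind. -/
def rS1 (r : ℕ) : ℕ → ℕ → ℕ
  | 0, 0 => 1
  | 0, _ + 1 => 0
  | n + 1, 0 => (r + n) * rS1 r n 0
  | n + 1, k + 1 => rS1 r n k + (r + n) * rS1 r n (k + 1)

/-- r-Bell numbers for integer r. -/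
def rBell (n : ℕ) (r : ℤ) : ℤ :=
  ∑ j ∈ Finset.range (n + 1), (n.choose j : ℤ) * r ^ (n - j) * (bell j : ℤ)

/-- r-Bell numbers for natural r, via r-Stirling numbers. -/
def rBellNat (n r : ℕ) : ℕ := ∑ k ∈ Finset.range (n + 1), rS2 r n k

theorem hall_period (p : ℕ) (hp : p.Prime) (n : ℕ) :
    bell (n + ∑ k ∈ Finset.range p, p ^ k) ≡ bell n [MOD p] := by
  haveI := Fact.mk hp
  set N := ∑ k ∈ Finset.range p, p ^ k with hN
  obtain ⟨g, hg⟩ := dvd_key p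
  have h1 : L ((X : (ZMod p)[X]) ^ n * (X ^ N - 1)) = 0 := by
    rw [hg, show (X : (ZMod p)[X]) ^ n * ((X ^ p - X - 1) * g)
      = (X ^ n * g) * (X ^ p - X - 1) by ring]
    exact L_h_mul p _
  have h2 : (X : (ZMod p)[X]) ^ n * (X ^ N - 1) = X ^ (n + N) - X ^ n := by
    rw [pow_add]; ring
  rw [h2, map_sub, L_X_pow, L_X_pow] at h1
  exact (ZMod.natCast_eq_natCast_iff _ _ _).mp (sub_eq_zero.mp h1)
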